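/- Let u : [a,b] → ℝ be Hölder continuous of order r ∈ (0,1] with constant H and f : [a,b] → ℝ of bounded variation. Then for all x ∈ [a,b], |[f(b) − f(a)]·u(x) − ∫ₐᵇ u(s) df(s)| ≤ H · ((b−a)/2 + |x − (a+b)/2|)^r · V(f;[a,b]). -/

import Mathlib

/-- A tagged partition of the interval `[a, b]`. -/
structure TaggedPartition (a b : ℝ) where
  n : ℕ
  pts : ℕ → ℝ
  tag : ℕ → ℝ
  mono : ∀ i, pts i ≤ pts (i + 1)
  first : pts 0 = a
  last : pts n = b
  tag_mem : ∀ i, pts i ≤ tag i ∧ tag i ≤ pts (i + 1)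

/-- The Riemann–Stieltjes sum of `f` with respect to `u` over a tagged partition. -/
def RSsum (f u : ℝ → ℝ) {a b : ℝ} (P : TaggedPartition a b) : ℝ :=
  ∑ i ∈ Finset.range P.n, f (P.tag i) * (u (P.pts (i + 1)) - u (P.pts i))

/-- `IsRSIntegral f u a b I` means the Riemann–Stieltjes integral `∫ₐᵇ f du` exists
and equals `I`: Riemann–Stieltjes sums converge to `I` as the mesh tends to `0`. -/
def IsRSIntegral (f u : ℝ → ℝ) (a b I : ℝ) : Prop :=
  ∀ ε > 0, ∃ δ > 0, ∀ P : TaggedPartition a b,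
    (∀ i < P.n, P.pts (i + 1) - P.pts i < δ) → |RSsum f u P - I| < ε

/-- The total (Jordan) variation of `u` on `[a, b]`. -/
noncomputable def totalVar (u : ℝ → ℝ) (a b : ℝ) : ℝ :=
  (eVariationOn u (Set.Icc a b)).toReal

/-!
Telescoping `f b - f a` along a partition turns `(f b - f a) u(x) - S(u, f; P)` into
`∑ (u x - u ξᵢ) (f xᵢ₊₁ - f xᵢ)`. Every tag `ξᵢ` lies within `(b - a)/2 + |x - (a + b)/2|`
of `x`, so by Hölder continuity each factor `|u x - u ξᵢ|` is at most
`H ((b - a)/2 + |x - (a + b)/2|)^r`, while `∑ |f xᵢ₊₁ - f xᵢ| ≤ V(f; [a, b])`. The bound thus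
holds for every Riemann–Stieltjes sum and passes to the integral along partitions of small mesh.
-/

open Set Finset

namespace TaggedPartition

variable {a b : ℝ} (P : TaggedPartition a b)

theorem monotone_pts : Monotone P.pts :=
  monotone_nat_of_le_succ P.mono

theorem pts_mem_Icc {i : ℕ} (hi : i ≤ P.n) : P.pts i ∈ Icc a b := by
  have h0 := P.monotone_pts (Nat.zero_le i)
  have hn := P.monotone_pts hi
  rw [P.first] at h0
  rw [P.last] at hn
  exact ⟨h0, hn⟩

theorem le (P : TaggedPartition a b) : a ≤ b :=
  (P.pts_mem_Icc le_rfl).1.trans_eq P.last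

theorem tag_mem_Icc {i : ℕ} (hi : i < P.n) : P.tag i ∈ Icc a b :=
  ⟨(P.pts_mem_Icc hi.le).1.trans (P.tag_mem i).1, (P.tag_mem i).2.trans (P.pts_mem_Icc hi).2⟩

theorem mul_sub_RSsum_eq_sum (f u : ℝ → ℝ) (c : ℝ) :
    (f b - f a) * c - RSsum u f P =
      ∑ i ∈ range P.n, (c - u (P.tag i)) * (f (P.pts (i + 1)) - f (P.pts i)) := by
  have htelescope : f b - f a = ∑ i ∈ range P.n, (f (P.pts (i + 1)) - f (P.pts i)) := by
    rw [Finset.sum_range_sub (fun i => f (P.pts i)), P.first, P.last]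
  rw [htelescope, RSsum, Finset.sum_mul, ← Finset.sum_sub_distrib]
  exact Finset.sum_congr rfl fun i _ => by ring

theorem sum_abs_sub_le_totalVar {f : ℝ → ℝ} (hf : BoundedVariationOn f (Icc a b)) :
    ∑ i ∈ range P.n, |f (P.pts (i + 1)) - f (P.pts i)| ≤ totalVar f a b := by
  have hsum := eVariationOn.sum_le_of_monotoneOn_Iic (f := f) (P.monotone_pts.monotoneOn _)
    fun i hi => P.pts_mem_Icc hi
  calc ∑ i ∈ range P.n, |f (P.pts (i + 1)) - f (P.pts i)|
      = (∑ i ∈ range P.n, edist (f (P.pts (i + 1))) (f (P.pts i))).toReal := by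
        rw [ENNReal.toReal_sum fun i _ => edist_ne_top _ _]
        simp only [edist_dist, Real.dist_eq, ENNReal.toReal_ofReal (abs_nonneg _)]
    _ ≤ totalVar f a b := ENNReal.toReal_mono hf hsum

theorem abs_mul_sub_RSsum_le {f u : ℝ → ℝ} {c K : ℝ} (hK : ∀ t ∈ Icc a b, |c - u t| ≤ K)
    (hf : BoundedVariationOn f (Icc a b)) :
    |(f b - f a) * c - RSsum u f P| ≤ K * totalVar f a b := by
  have hK0 : 0 ≤ K := (abs_nonneg _).trans (hK a ⟨le_rfl, P.le⟩)
  rw [P.mul_sub_RSsum_eq_sum]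
  calc |∑ i ∈ range P.n, (c - u (P.tag i)) * (f (P.pts (i + 1)) - f (P.pts i))|
      ≤ ∑ i ∈ range P.n, |(c - u (P.tag i)) * (f (P.pts (i + 1)) - f (P.pts i))| :=
        Finset.abs_sum_le_sum_abs _ _
    _ ≤ ∑ i ∈ range P.n, K * |f (P.pts (i + 1)) - f (P.pts i)| := by
        refine Finset.sum_le_sum fun i hi => ?_
        rw [abs_mul]
        gcongr
        exact hK _ (P.tag_mem_Icc (Finset.mem_range.mp hi))
    _ = K * ∑ i ∈ range P.n, |f (P.pts (i + 1)) - f (P.pts i)| := by rw [Finset.mul_sum]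
    _ ≤ K * totalVar f a b := by gcongr; exact P.sum_abs_sub_le_totalVar hf

/-- Indices beyond `n + 1` are clamped to `b`. -/
noncomputable def uniform (a b : ℝ) (hab : a ≤ b) (n : ℕ) : TaggedPartition a b where
  n := n + 1
  pts i := a + (min i (n + 1) : ℕ) * ((b - a) / (n + 1))
  tag i := a + (min i (n + 1) : ℕ) * ((b - a) / (n + 1))
  mono i := by
    have hstep : 0 ≤ (b - a) / (n + 1) := by positivity
    gcongr
    omega
  first := by simp
  last := by
    rw [min_self]
    push_cast
    field_simp
    ring
  tag_mem i := ⟨le_rfl, by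
    have hstep : 0 ≤ (b - a) / (n + 1) := by positivity
    gcongr
    omega⟩

theorem uniform_pts_succ_sub_le {hab : a ≤ b} (n i : ℕ) :
    (uniform a b hab n).pts (i + 1) - (uniform a b hab n).pts i ≤ (b - a) / (n + 1) := by
  have hstep : 0 ≤ (b - a) / (n + 1) := by positivity
  have hgap : ((min (i + 1) (n + 1) : ℕ) : ℝ) ≤ (min i (n + 1) : ℕ) + 1 := by
    exact_mod_cast (show min (i + 1) (n + 1) ≤ min i (n + 1) + 1 by omega)
  simp only [uniform]
  nlinarith

theorem exists_mesh_lt (hab : a ≤ b) {δ : ℝ} (hδ : 0 < δ) :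
    ∃ P : TaggedPartition a b, ∀ i < P.n, P.pts (i + 1) - P.pts i < δ := by
  obtain ⟨n, hn⟩ := exists_nat_gt ((b - a) / δ)
  refine ⟨uniform a b hab n, fun i _ => (uniform_pts_succ_sub_le n i).trans_lt ?_⟩
  rw [div_lt_iff₀ (by positivity)]
  rw [div_lt_iff₀ hδ] at hn
  nlinarith

end TaggedPartition

theorem IsRSIntegral.abs_sub_le_of_forall_abs_sub_RSsum_le {u f : ℝ → ℝ} {a b J c B : ℝ}
    (hJ : IsRSIntegral u f a b J) (hab : a ≤ b)
    (hB : ∀ P : TaggedPartition a b, |c - RSsum u f P| ≤ B) : |c - J| ≤ B := by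
  refine le_of_forall_pos_le_add fun ε hε => ?_
  obtain ⟨δ, hδ, hJδ⟩ := hJ ε hε
  obtain ⟨P, hP⟩ := TaggedPartition.exists_mesh_lt hab hδ
  calc |c - J| ≤ |c - RSsum u f P| + |RSsum u f P - J| := abs_sub_le _ _ _
    _ ≤ B + ε := add_le_add (hB P) (hJδ P hP).le

theorem abs_sub_le_half_length_add_abs_sub_midpoint {a b x t : ℝ}
    (ht : t ∈ Icc a b) : |x - t| ≤ (b - a) / 2 + |x - (a + b) / 2| := by
  have hmid : |(a + b) / 2 - t| ≤ (b - a) / 2 := abs_le.mpr ⟨by linarith [ht.2], by linarith [ht.1]⟩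
  calc |x - t| ≤ |x - (a + b) / 2| + |(a + b) / 2 - t| := abs_sub_le _ _ _
    _ ≤ (b - a) / 2 + |x - (a + b) / 2| := by linarith

theorem trapezoid_dual_parts_bounded_variation_general
    (a b H r x J : ℝ) (f u : ℝ → ℝ)
    (hr : 0 < r) (hH : 0 ≤ H)
    (hu : ∀ s ∈ Set.Icc a b, ∀ t ∈ Set.Icc a b, |u s - u t| ≤ H * |s - t| ^ r)
    (hf : BoundedVariationOn f (Set.Icc a b))
    (hx : x ∈ Set.Icc a b)
    (hJ : IsRSIntegral u f a b J) :
    |(f b - f a) * u x - J| ≤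
      H * ((b - a) / 2 + |x - (a + b) / 2|) ^ r * totalVar f a b := by
  refine hJ.abs_sub_le_of_forall_abs_sub_RSsum_le (hx.1.trans hx.2) fun P =>
    P.abs_mul_sub_RSsum_le (fun t ht => ?_) hf
  calc |u x - u t| ≤ H * |x - t| ^ r := hu x hx t ht
    _ ≤ H * ((b - a) / 2 + |x - (a + b) / 2|) ^ r := by
      gcongr
      exact abs_sub_le_half_length_add_abs_sub_midpoint ht

theorem trapezoid_dual_parts_bounded_variation
    (a b H r x J : ℝ) (f u : ℝ → ℝ)
    (hr : 0 < r) (hr1 : r ≤ 1) (hH : 0 ≤ H)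
    (hu : ∀ s ∈ Set.Icc a b, ∀ t ∈ Set.Icc a b, |u s - u t| ≤ H * |s - t| ^ r)
    (hf : BoundedVariationOn f (Set.Icc a b))
    (hx : x ∈ Set.Icc a b)
    (hJ : IsRSIntegral u f a b J) :
    |(f b - f a) * u x - J| ≤
      H * ((b - a) / 2 + |x - (a + b) / 2|) ^ r * totalVar f a b :=
  trapezoid_dual_parts_bounded_variation_general a b H r x J f u hr hH hu hf hx hJ
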